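/- arXiv:2510.22116 — 2 statements merged into one kernel-verified Lean document; each statement's English description precedes it below -/
import Mathlib

section
/- Let K be a field, d ≥ 2, G := [0,ℓ_1] × … × [0,ℓ_d] ⊆ ℤ^d a finite grid with ℓ_k ≥ 1 for all k, n := ℓ_1 + … + ℓ_d + 1, and S := (S_1,…,S_n) the norm slicing S_i := {x ∈ G : x_1 + … + x_d = i−1}. Then there exist pointwise finite-dimensional persistence modules X and Y over ℤ^d supported on G such that rk_X = rk_Y but rk^1_{X,S}(0,0) ≠ rk^1_{Y,S}(0,0) (in fact one can achieve rk^1_{X,S}(0,0) = 1 and rk^1_{Y,S}(0,0) = 2); in particular X and Y are not isomorphic. -/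
/-!
Take the segments `A = [0, e₁]` and `B = [0, e₂]` of `ℤ^d`, and put `X = I_{A ∪ B} ⊕ I_{A ∩ B}`,
`Y = I_A ⊕ I_B`. A structure map of an interval module has rank one exactly when both ends lie in
the interval; since no point of `A \ B` lies below a point of `B \ A` (or conversely), the rank
invariants of `X` and `Y` agree. On the other hand `rk¹_{M,S}(0,0) = rank T_{M,S}` is additive
under direct sums. For an interval module in the region of norm at most one, every nonzero
component of `T` starts at the origin, so `T` has rank one if the interval contains `0` and a
point of the first slice, and vanishes on `I_{A ∩ B} = I_{{0}}`: this gives `1 + 0` for `X` and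
`1 + 1` for `Y`. As the rank of `T` is an isomorphism invariant, `X ≇ Y`.
-/
open scoped Classical ENNReal

noncomputable section

/-- A persistence module over a poset `P` with coefficients in a field `K`:
vector spaces `V x` together with structure maps `map : V x →ₗ V y` for `x ≤ y`. -/
structure PersistenceModule (K : Type) [Field K] (P : Type) [PartialOrder P] where
  V : P → Type
  [acg : ∀ x, AddCommGroup (V x)]
  [mod : ∀ x, Module K (V x)]
  map : ∀ {x y : P}, x ≤ y → (V x →ₗ[K] V y)
  map_refl : ∀ x : P, map (le_refl x) = LinearMap.id
  map_comp : ∀ {x y z : P} (hxy : x ≤ y) (hyz : y ≤ z),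
      (map hyz).comp (map hxy) = map (hxy.trans hyz)

attribute [instance] PersistenceModule.acg PersistenceModule.mod

variable {K : Type} [Field K]

section Basic

variable {P : Type} [PartialOrder P]

/-- Pointwise finite-dimensionality. -/
def PersistenceModule.pfd (M : PersistenceModule K P) : Prop :=
  ∀ x, FiniteDimensional K (M.V x)

/-- A morphism of persistence modules. -/
structure PersistenceHom (M N : PersistenceModule K P) where
  app : ∀ x, M.V x →ₗ[K] N.V x
  naturality : ∀ {x y : P} (h : x ≤ y),
      (app y).comp (M.map h) = (N.map h).comp (app x)

/-- The identity morphism. -/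
def PersistenceHom.id (M : PersistenceModule K P) : PersistenceHom M M where
  app _ := LinearMap.id
  naturality _ := by simp

/-- Composition of morphisms of persistence modules. -/
def PersistenceHom.comp {M N L : PersistenceModule K P}
    (g : PersistenceHom N L) (f : PersistenceHom M N) : PersistenceHom M L where
  app x := (g.app x).comp (f.app x)
  naturality {x y} h := by
    ext v
    have hf := LinearMap.congr_fun (f.naturality h) v
    have hg := LinearMap.congr_fun (g.naturality h) (f.app x v)
    simp only [LinearMap.comp_apply] at hf hg ⊢
    rw [hf, hg]

/-- Two persistence modules are isomorphic iff there is a morphism which is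
pointwise bijective. -/
def PersistenceIso (M N : PersistenceModule K P) : Prop :=
  ∃ f : PersistenceHom M N, ∀ x, Function.Bijective (f.app x)

/-- The (pointwise) direct sum of two persistence modules. -/
def PersistenceModule.dsum (M₁ M₂ : PersistenceModule K P) : PersistenceModule K P where
  V x := M₁.V x × M₂.V x
  map h := (M₁.map h).prodMap (M₂.map h)
  map_refl x := by
    show (M₁.map (le_refl x)).prodMap (M₂.map (le_refl x)) = LinearMap.id
    rw [M₁.map_refl, M₂.map_refl]; rfl
  map_comp hxy hyz := by
    show ((M₁.map hyz).prodMap (M₂.map hyz)).comp ((M₁.map hxy).prodMap (M₂.map hxy)) =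
      (M₁.map (hxy.trans hyz)).prodMap (M₂.map (hxy.trans hyz))
    rw [← M₁.map_comp hxy hyz, ← M₂.map_comp hxy hyz]; rfl

/-- The rank of a linear map, as a natural number. -/
noncomputable def lrank {V W : Type} [AddCommGroup V] [Module K V]
    [AddCommGroup W] [Module K W] (f : V →ₗ[K] W) : ℕ :=
  Module.finrank K (LinearMap.range f)

/-- The classical rank invariant of a persistence module. -/
noncomputable def rankInv (M : PersistenceModule K P) (x y : P) : ℕ∞ :=
  if h : x ≤ y then (lrank (M.map h) : ℕ∞) else ⊤

variable {n : ℕ}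

/-- The index set of the restriction `M|_S`: the disjoint union of the slices. -/
abbrev SliceIdx (S : Fin n → Finset P) : Type := Σ i : Fin n, {x // x ∈ S i}

/-- The underlying vector space of the restriction `M|_S = ⊕_{x ∈ S₁ ∪ … ∪ Sₙ} M_x`. -/
abbrev sliceSpace (M : PersistenceModule K P) (S : Fin n → Finset P) : Type :=
  (p : SliceIdx S) → M.V p.2.1

/-- The nilpotent operator `T_{M,S}` on `M|_S`: its component `M_x → M_y` is the
structure map `M_{yx}` if `x ∈ S_i`, `y ∈ S_{i+1}` and `x ≤ y`, and `0` otherwise. -/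
noncomputable def TMap (M : PersistenceModule K P) (S : Fin n → Finset P) :
    sliceSpace M S →ₗ[K] sliceSpace M S :=
  LinearMap.pi fun p => ∑ q : SliceIdx S,
    if h : (q.1 : ℕ) + 1 = (p.1 : ℕ) ∧ q.2.1 ≤ p.2.1 then
      (M.map h.2).comp (LinearMap.proj q)
    else 0

/-- The restriction `f|_S = ⊕_{x ∈ S} f_x` of a morphism to the slices. -/
noncomputable def sliceHom {M N : PersistenceModule K P} (f : PersistenceHom M N)
    (S : Fin n → Finset P) : sliceSpace M S →ₗ[K] sliceSpace N S :=
  LinearMap.pi fun p => (f.app p.2.1).comp (LinearMap.proj p)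

/-- The `i`-th entry of the Jordan type of `M` at `S` (as an integer):
`a_i = rank(T^{i-1}) + rank(T^{i+1}) - 2 rank(T^i)`, the number of `i × i`
Jordan blocks of the nilpotent operator `T_{M,S}`. -/
noncomputable def jt (M : PersistenceModule K P) (S : Fin n → Finset P) (i : ℕ) : ℤ :=
  (lrank (TMap M S ^ (i - 1)) : ℤ) + (lrank (TMap M S ^ (i + 1)) : ℤ)
    - 2 * (lrank (TMap M S ^ i) : ℤ)

end Basic

section Shifts

variable {P : Type} [AddCommGroup P] [PartialOrder P] [IsOrderedAddMonoid P]

/-- The shift `M[x]` of a persistence module, `(M[x])_z = M_{x+z}`. -/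
def PersistenceModule.shift (M : PersistenceModule K P) (x : P) :
    PersistenceModule K P where
  V z := M.V (x + z)
  map h := M.map (add_le_add_right h x)
  map_refl z := M.map_refl (x + z)
  map_comp hxy hyz := M.map_comp _ _

/-- Shifts preserve pointwise finite-dimensionality. -/
theorem PersistenceModule.pfd.shift {M : PersistenceModule K P} (hM : M.pfd) (x : P) :
    (M.shift x).pfd := fun z => hM (x + z)

/-- The shift `f[x]` of a morphism of persistence modules. -/
def PersistenceHom.shiftHom {M N : PersistenceModule K P} (f : PersistenceHom M N)
    (x : P) : PersistenceHom (M.shift x) (N.shift x) where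
  app z := f.app (x + z)
  naturality h := f.naturality (add_le_add_right h x)

/-- The shift morphism `sh_M^ε : M → M[ε]`, with components `M_{z+ε,z}`. -/
def shMor (M : PersistenceModule K P) (ε : P) (hε : 0 ≤ ε) :
    PersistenceHom M (M.shift ε) where
  app z := M.map (le_add_of_nonneg_left hε)
  naturality {z w} h := by
    show (M.map (le_add_of_nonneg_left hε)).comp (M.map h) =
      (M.map (add_le_add_right h ε)).comp (M.map (le_add_of_nonneg_left hε))
    rw [M.map_comp, M.map_comp]

/-- `(f, g)` form an `ε`-interleaving between `M` and `N`: componentwise,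
`g[ε] ∘ f = sh_M^{2ε}` and `f[ε] ∘ g = sh_N^{2ε}`. -/
def IsInterleavingPair {M N : PersistenceModule K P} (ε : P) (hε : 0 ≤ ε)
    (f : PersistenceHom M (N.shift ε)) (g : PersistenceHom N (M.shift ε)) : Prop :=
  (∀ z : P, (g.app (ε + z)).comp (f.app z) =
    M.map ((le_add_of_nonneg_left hε).trans
      (add_le_add_right (le_add_of_nonneg_left hε) ε))) ∧
  (∀ z : P, (f.app (ε + z)).comp (g.app z) =
    N.map ((le_add_of_nonneg_left hε).trans
      (add_le_add_right (le_add_of_nonneg_left hε) ε)))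

/-- There exists an `ε`-interleaving between `M` and `N`. -/
def IsInterleaving (M N : PersistenceModule K P) (ε : P) (hε : 0 ≤ ε) : Prop :=
  ∃ (f : PersistenceHom M (N.shift ε)) (g : PersistenceHom N (M.shift ε)),
    IsInterleavingPair ε hε f g

variable {n : ℕ}

/-- The map `⊕_{z ∈ S} M_{y+z,x+z} : M[x]|_S → M[y]|_S` for `x ≤ y`. -/
noncomputable def transMap (M : PersistenceModule K P) (S : Fin n → Finset P)
    {x y : P} (h : x ≤ y) :
    sliceSpace (M.shift x) S →ₗ[K] sliceSpace (M.shift y) S :=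
  LinearMap.pi fun p => (M.map (add_le_add_left h p.2.1)).comp (LinearMap.proj p)

/-- The degree-`i` Jordan rank invariant `rk^i_{M,S}(x,y)`: for `x ≤ y` it is the rank
of the structure map `(M^i_S)_{yx}` of the degree-`i` Jordan module, i.e. the rank of
the restriction of `⊕_z M_{y+z,x+z}` to `Im(T^i_{M[x],S})`; it is `∞` otherwise. -/
noncomputable def jordanRk (M : PersistenceModule K P) (S : Fin n → Finset P)
    (i : ℕ) (x y : P) : ℕ∞ :=
  if h : x ≤ y then
    (Module.finrank K
      (Submodule.map (transMap M S h) (LinearMap.range (TMap (M.shift x) S ^ i))) : ℕ∞)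
  else ⊤

end Shifts

section Functors

variable {P : Type} [PartialOrder P]

/-- A functor from the category of pointwise finite-dimensional persistence modules
over `P` to the category of finite-dimensional `K`-vector spaces. -/
structure PMFunctor (K : Type) [Field K] (P : Type) [PartialOrder P] where
  obj : (M : PersistenceModule K P) → M.pfd → Type
  [objAcg : ∀ M hM, AddCommGroup (obj M hM)]
  [objMod : ∀ M hM, Module K (obj M hM)]
  objFin : ∀ M hM, FiniteDimensional K (obj M hM)
  fmap : {M N : PersistenceModule K P} → (hM : M.pfd) → (hN : N.pfd) →
      PersistenceHom M N → (obj M hM →ₗ[K] obj N hN)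
  fmap_id : ∀ (M : PersistenceModule K P) (hM : M.pfd),
      fmap hM hM (PersistenceHom.id M) = LinearMap.id
  fmap_comp : ∀ {M N L : PersistenceModule K P} (hM : M.pfd) (hN : N.pfd) (hL : L.pfd)
      (f : PersistenceHom M N) (g : PersistenceHom N L),
      fmap hM hL (g.comp f) = (fmap hN hL g).comp (fmap hM hN f)

attribute [instance] PMFunctor.objAcg PMFunctor.objMod

end Functors

section FRank

variable {P : Type} [AddCommGroup P] [PartialOrder P] [IsOrderedAddMonoid P]

/-- The `F`-rank invariant `rk_{M,F}(x,y)`: for `x ≤ y` it is the rank of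
`F(sh^{y-x}_{M[x]}) : F(M[x]) → F(M[x][y-x])`, and `∞` otherwise. -/
noncomputable def frk (F : PMFunctor K P) (M : PersistenceModule K P) (hM : M.pfd)
    (x y : P) : ℕ∞ :=
  if h : x ≤ y then
    (lrank (F.fmap (hM.shift x) ((hM.shift x).shift (y - x))
      (shMor (M.shift x) (y - x) (sub_nonneg.mpr h))) : ℕ∞)
  else ⊤

end FRank

section RankFunctions

variable {P : Type} [PartialOrder P]

/-- A rank function: `∞` off the order relation, and "erosion monotone". -/
def IsRankFunction (F : P → P → ℕ∞) : Prop :=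
  (∀ x y : P, ¬ x ≤ y → F x y = ⊤) ∧
  ∀ x x' y' y : P, x ≤ x' → x' ≤ y' → y' ≤ y → F x y ≤ F x' y'

end RankFunctions

section Distances

variable {R : Type} [CommRing R] [LinearOrder R] [IsStrictOrderedRing R] {d : ℕ}

/-- The interleaving distance between two persistence modules over `Fin d → R`,
computed in `ℝ≥0∞` via the embedding `toR : R → ℝ`. -/
noncomputable def interleavingDist (toR : R → ℝ)
    (M N : PersistenceModule K (Fin d → R)) : ℝ≥0∞ :=
  sInf {c : ℝ≥0∞ | ∃ (ε : R) (hε : 0 ≤ ε),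
    IsInterleaving M N (fun _ => ε) (fun _ => hε) ∧ c = ENNReal.ofReal (toR ε)}

/-- The erosion distance between two `ℕ∞`-valued functions on pairs of points. -/
noncomputable def erosionDist (toR : R → ℝ)
    (F G : (Fin d → R) → (Fin d → R) → ℕ∞) : ℝ≥0∞ :=
  sInf {c : ℝ≥0∞ | ∃ ε : R, 0 ≤ ε ∧
    (∀ x y : Fin d → R, x ≤ y →
      F (x - fun _ => ε) (y + fun _ => ε) ≤ G x y ∧
      G (x - fun _ => ε) (y + fun _ => ε) ≤ F x y) ∧
    c = ENNReal.ofReal (toR ε)}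

/-- The persistence landscape `λ_F(k,x)` of a rank function `F`. -/
noncomputable def landscape (toR : R → ℝ)
    (F : (Fin d → R) → (Fin d → R) → ℕ∞) (k : ℕ) (x : Fin d → R) : ℝ≥0∞ :=
  sSup {c : ℝ≥0∞ | ∃ ε : ℝ, 0 < ε ∧
    (∀ h : Fin d → R, (∀ i, |toR (h i)| ≤ ε) → (k : ℕ∞) ≤ F (x - h) (x + h)) ∧
    c = ENNReal.ofReal ε}

/-- The sup-distance `‖λ_F - λ_G‖_∞` between the landscapes of `F` and `G`. -/
noncomputable def landscapeDist (toR : R → ℝ)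
    (F G : (Fin d → R) → (Fin d → R) → ℕ∞) : ℝ≥0∞ :=
  ⨆ (k : ℕ) (x : Fin d → R),
    max (landscape toR F k x - landscape toR G k x)
      (landscape toR G k x - landscape toR F k x)

end Distances

section Zigzag

variable {P : Type} [PartialOrder P] {n : ℕ}

/-- The orientation relation of a zigzag: for each `k < n - 1`, exactly one
of the covering pairs `(k, k+1)` (if `ω k = true`) or `(k+1, k)` (if `ω k = false`),
and no other pairs. -/
def zigzagStep (n : ℕ) (ω : ℕ → Bool) (i j : Fin n) : Prop :=
  ((j : ℕ) = (i : ℕ) + 1 ∧ ω (i : ℕ) = true) ∨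
  ((i : ℕ) = (j : ℕ) + 1 ∧ ω (j : ℕ) = false)

/-- `P` is a zigzag poset on `{0, …, n-1}` via the labeling `e`, with orientation `ω`:
the order of `P` is the reflexive-transitive closure of the zigzag relation. -/
def IsZigzag (n : ℕ) (ω : ℕ → Bool) (e : P ≃ Fin n) : Prop :=
  ∀ a b : P, a ≤ b ↔ Relation.ReflTransGen (zigzagStep n ω) (e a) (e b)

/-- The subposet `{i, …, j}` of a labeled poset. -/
def zzInterval (e : P ≃ Fin n) (i j : ℕ) : Set P :=
  {p | i ≤ (e p : ℕ) ∧ (e p : ℕ) ≤ j}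

/-- `S⁺_{ij}`: the minimal elements of the subposet `{i, …, j}`. -/
def zzMin (e : P ≃ Fin n) (i j : ℕ) : Set P :=
  {p | p ∈ zzInterval e i j ∧ ∀ q ∈ zzInterval e i j, q ≤ p → q = p}

/-- `S⁻_{ij}`: the maximal elements of the subposet `{i, …, j}`. -/
def zzMax (e : P ≃ Fin n) (i j : ℕ) : Set P :=
  {p | p ∈ zzInterval e i j ∧ ∀ q ∈ zzInterval e i j, p ≤ q → q = p}

/-- The map `T_{M,S_{ij}} : ⊕_{x ∈ S⁺_{ij}} M_x → ⊕_{y ∈ S⁻_{ij}} M_y`, whose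
`(y,x)`-component is `M_{yx}` if `x ≤ y` and `0` otherwise. -/
noncomputable def Tij (e : P ≃ Fin n) (M : PersistenceModule K P) (i j : ℕ) :
    ((x : zzMin e i j) → M.V x.1) →ₗ[K] ((y : zzMax e i j) → M.V y.1) :=
  letI : Fintype P := Fintype.ofEquiv (Fin n) e.symm
  LinearMap.pi fun y => ∑ x : zzMin e i j,
    if h : x.1 ≤ y.1 then (M.map h).comp (LinearMap.proj x) else 0

end Zigzag

section Jordan

/-- The underlying space of the `K[t]/(t^n)`-module `⊕_{i=1}^n (K[t]/(t^i))^{a_i}`,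
where the summand of dimension `(i : Fin n) + 1` occurs with multiplicity `a i`. -/
abbrev jordanSpace (K : Type) (n : ℕ) (a : Fin n → ℕ) : Type :=
  (i : Fin n) → Fin (a i) → Fin ((i : ℕ) + 1) → K

/-- The nilpotent Jordan block of size `m`, i.e. multiplication by `t` on
`K[t]/(t^m)` in the basis `1, t, …, t^{m-1}`. -/
noncomputable def jordanBlock (K : Type) [Field K] (m : ℕ) :
    (Fin m → K) →ₗ[K] (Fin m → K) :=
  LinearMap.pi fun k =>
    if _ : (k : ℕ) = 0 then 0
    else LinearMap.proj (⟨(k : ℕ) - 1, Nat.lt_of_le_of_lt (Nat.sub_le _ _) k.isLt⟩ : Fin m)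

/-- Multiplication by `t` on `⊕_{i=1}^n (K[t]/(t^i))^{a_i}`. -/
noncomputable def jordanOp (K : Type) [Field K] (n : ℕ) (a : Fin n → ℕ) :
    jordanSpace K n a →ₗ[K] jordanSpace K n a :=
  LinearMap.pi fun i => LinearMap.pi fun j =>
    (jordanBlock K ((i : ℕ) + 1)).comp
      ((LinearMap.proj j :
          (Fin (a i) → Fin ((i : ℕ) + 1) → K) →ₗ[K] (Fin ((i : ℕ) + 1) → K)).comp
        (LinearMap.proj i :
          jordanSpace K n a →ₗ[K] (Fin (a i) → Fin ((i : ℕ) + 1) → K)))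

/-- Two pairs (vector space, endomorphism) are isomorphic as `K[t]`-modules. -/
def OpIso {K : Type} [Field K] {V W : Type} [AddCommGroup V] [Module K V]
    [AddCommGroup W] [Module K W] (T : V →ₗ[K] V) (U : W →ₗ[K] W) : Prop :=
  ∃ e : V ≃ₗ[K] W, ∀ v, e (T v) = U (e v)

/-- The total space `⊕_{k=1}^n I_k` of the interval representation `I_{[a,b]}`
of the equioriented `A_n` quiver (vertices are `1`-based: vertex `k+1` for `k : Fin n`). -/
abbrev intervalSpace (K : Type) (n a b : ℕ) : Type :=
  {k : Fin n // a ≤ (k : ℕ) + 1 ∧ (k : ℕ) + 1 ≤ b} → K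

/-- The operator `T` on `⊕_k I_k` given by the arrow maps of `I_{[a,b]}`. -/
noncomputable def intervalShift (K : Type) [Field K] (n a b : ℕ) :
    intervalSpace K n a b →ₗ[K] intervalSpace K n a b :=
  LinearMap.pi fun k =>
    if h : a ≤ (k.1 : ℕ) then
      LinearMap.proj
        (⟨⟨(k.1 : ℕ) - 1, Nat.lt_of_le_of_lt (Nat.sub_le _ _) k.1.isLt⟩,
          ⟨by have h2 := k.2.2; show a ≤ (k.1 : ℕ) - 1 + 1; omega,
           by have h2 := k.2.2; show (k.1 : ℕ) - 1 + 1 ≤ b; omega⟩⟩ :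
          {k : Fin n // a ≤ (k : ℕ) + 1 ∧ (k : ℕ) + 1 ≤ b})
    else 0

end Jordan

section Grid

variable {d : ℕ}

/-- The grid `[0,ℓ₁] × … × [0,ℓ_d] ⊆ ℤ^d`. -/
def gridSet (d : ℕ) (ℓ : Fin d → ℕ) : Set (Fin d → ℤ) :=
  {x | ∀ k, 0 ≤ x k ∧ x k ≤ (ℓ k : ℤ)}

/-- The norm slice `S_{i+1} = {x ∈ G : x₁ + … + x_d = i}` of the grid. -/
noncomputable def gridSlice (d : ℕ) (ℓ : Fin d → ℕ) (i : ℕ) : Finset (Fin d → ℤ) :=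
  (Fintype.piFinset fun k => Finset.Icc (0 : ℤ) (ℓ k)).filter
    fun x => (∑ k, x k) = (i : ℤ)

/-- A persistence module over `ℤ^d` is supported on `G` if it vanishes off `G`. -/
def supportedOn (M : PersistenceModule K (Fin d → ℤ)) (G : Set (Fin d → ℤ)) : Prop :=
  ∀ z, z ∉ G → Subsingleton (M.V z)

end Grid

section AnQuiver

variable {P : Type} [PartialOrder P] {n : ℕ}

/-- The space `M|_S(k) = ⊕_{x ∈ S_k} M_x` at the `k`-th vertex of the `A_n` quiver. -/
abbrev sliceLevel (M : PersistenceModule K P) (S : Fin n → Finset P) (k : Fin n) :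
    Type :=
  (x : {a // a ∈ S k}) → M.V x.1

/-- The arrow map `T_{M,S}(k) : M|_S(k) → M|_S(k+1)`, whose `(y,x)`-component
is `M_{yx}` if `x ≤ y` and `0` otherwise. -/
noncomputable def sliceArrow (M : PersistenceModule K P) (S : Fin n → Finset P)
    (k : Fin n) (h : (k : ℕ) + 1 < n) :
    sliceLevel M S k →ₗ[K] sliceLevel M S ⟨(k : ℕ) + 1, h⟩ :=
  LinearMap.pi fun y => ∑ x : {a // a ∈ S k},
    if hxy : x.1 ≤ y.1 then (M.map hxy).comp (LinearMap.proj x) else 0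

/-- The value at vertex `k` (with `1`-based label `k+1`) of the direct sum of the
interval representations `I_{[(ind j).1, (ind j).2]}`, `j : Fin m`, of the
equioriented `A_n` quiver. -/
abbrev sumIntSpace (K : Type) {m : ℕ} (ind : Fin m → ℕ × ℕ) {n : ℕ} (k : Fin n) :
    Type :=
  (j : Fin m) → PLift ((ind j).1 ≤ (k : ℕ) + 1 ∧ (k : ℕ) + 1 ≤ (ind j).2) → K

/-- The arrow map from vertex `k` to vertex `k+1` of the direct sum of interval
representations: the identity on each interval passing through both vertices. -/
noncomputable def sumIntArrow (K : Type) [Field K] {m : ℕ} (ind : Fin m → ℕ × ℕ)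
    {n : ℕ} (k : Fin n) (h : (k : ℕ) + 1 < n) :
    sumIntSpace K ind k →ₗ[K] sumIntSpace K ind (⟨(k : ℕ) + 1, h⟩ : Fin n) :=
  LinearMap.pi fun j => LinearMap.pi fun _ =>
    if hk : (ind j).1 ≤ (k : ℕ) + 1 ∧ (k : ℕ) + 1 ≤ (ind j).2 then
      (LinearMap.proj (PLift.up hk) :
          (PLift ((ind j).1 ≤ (k : ℕ) + 1 ∧ (k : ℕ) + 1 ≤ (ind j).2) → K) →ₗ[K] K).comp
        (LinearMap.proj j : sumIntSpace K ind k →ₗ[K]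
          (PLift ((ind j).1 ≤ (k : ℕ) + 1 ∧ (k : ℕ) + 1 ≤ (ind j).2) → K))
    else 0

end AnQuiver

open Set

section LinearAlgebra

variable {V W V' W' : Type} [AddCommGroup V] [Module K V] [AddCommGroup W] [Module K W]
  [AddCommGroup V'] [Module K V'] [AddCommGroup W'] [Module K W']

theorem lrank_eq_of_comp_eq (e : V ≃ₗ[K] W) (e' : V' ≃ₗ[K] W') {f : V →ₗ[K] V'}
    {g : W →ₗ[K] W'} (h : g ∘ₗ (e : V →ₗ[K] W) = (e' : V' →ₗ[K] W') ∘ₗ f) :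
    lrank g = lrank f := by
  rw [lrank, lrank, ← LinearMap.range_comp_of_range_eq_top g e.range, h,
    LinearMap.range_comp, LinearEquiv.finrank_map_eq]

theorem lrank_prodMap [FiniteDimensional K V'] [FiniteDimensional K W']
    (f : V →ₗ[K] V') (g : W →ₗ[K] W') : lrank (f.prodMap g) = lrank f + lrank g := by
  let ι := (LinearMap.range f).subtype.prodMap (LinearMap.range g).subtype
  have hinj : Function.Injective ι :=
    Prod.map_injective.mpr ⟨Subtype.val_injective, Subtype.val_injective⟩
  have hrange : LinearMap.range (f.prodMap g) = LinearMap.range ι := by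
    simp only [ι, LinearMap.range_prodMap, Submodule.range_subtype]
  rw [lrank, hrange, LinearMap.finrank_range_of_inj hinj, Module.finrank_prod]
  rfl

end LinearAlgebra

section Modules

variable {P : Type} [PartialOrder P]

theorem PersistenceModule.map_bijective (M : PersistenceModule K P) {x y : P} (hxy : x ≤ y)
    (hyx : y ≤ x) : Function.Bijective (M.map hxy) := by
  obtain rfl := le_antisymm hxy hyx
  rw [M.map_refl]
  exact Function.bijective_id

theorem PersistenceModule.pfd.dsum {M₁ M₂ : PersistenceModule K P} (h₁ : M₁.pfd)
    (h₂ : M₂.pfd) : (M₁.dsum M₂).pfd := fun x =>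
  have := h₁ x; have := h₂ x
  inferInstanceAs (FiniteDimensional K (M₁.V x × M₂.V x))

theorem rankInv_dsum {M₁ M₂ : PersistenceModule K P} (h₁ : M₁.pfd) (h₂ : M₂.pfd) (x y : P) :
    rankInv (M₁.dsum M₂) x y = rankInv M₁ x y + rankInv M₂ x y := by
  unfold rankInv
  split_ifs with h
  · have := h₁ y; have := h₂ y
    exact_mod_cast lrank_prodMap (M₁.map h) (M₂.map h)
  · rfl

variable {n : ℕ} {S : Fin n → Finset P}

/-- `q.IsEdge p`: the component `M_q → M_p` of `T_{M,S}` is the structure map `M_{pq}`. -/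
abbrev SliceIdx.IsEdge (q p : SliceIdx S) : Prop := (q.1 : ℕ) + 1 = (p.1 : ℕ) ∧ q.2.1 ≤ p.2.1

theorem TMap_apply (M : PersistenceModule K P) (f : sliceSpace M S) (p : SliceIdx S) :
    TMap M S f p = ∑ q : SliceIdx S, if h : q.IsEdge p then M.map h.2 (f q) else 0 := by
  simp only [TMap, LinearMap.pi_apply, LinearMap.sum_apply]
  refine Finset.sum_congr rfl fun q _ => ?_
  split_ifs <;> rfl

theorem TMap_single_apply (M : PersistenceModule K P) (q₀ p : SliceIdx S) (v : M.V q₀.2.1) :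
    TMap M S (Pi.single q₀ v) p = if h : q₀.IsEdge p then M.map h.2 v else 0 := by
  rw [TMap_apply, Finset.sum_eq_single q₀ (fun q _ hq => by simp [Pi.single_eq_of_ne hq])
    (by simp), Pi.single_eq_same]

theorem TMap_eq_zero_of_map_eq_zero (M : PersistenceModule K P)
    (h : ∀ (q p : SliceIdx S) (hqp : q.IsEdge p), M.map hqp.2 = 0) : TMap M S = 0 := by
  refine LinearMap.ext fun f => funext fun p => ?_
  rw [TMap_apply]
  exact Finset.sum_eq_zero fun q _ =>
    dite_eq_right_iff.mpr fun hqp => by rw [h q p hqp, LinearMap.zero_apply]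

theorem lrank_TMap_le_finrank (M : PersistenceModule K P) (q₀ : SliceIdx S)
    [FiniteDimensional K (M.V q₀.2.1)]
    (h : ∀ (q p : SliceIdx S) (hqp : q.IsEdge p), q ≠ q₀ → M.map hqp.2 = 0) :
    lrank (TMap M S) ≤ Module.finrank K (M.V q₀.2.1) := by
  have hfactor : TMap M S = (TMap M S ∘ₗ LinearMap.single K _ q₀) ∘ₗ LinearMap.proj q₀ := by
    refine LinearMap.ext fun f => funext fun p => ?_
    simp only [LinearMap.comp_apply, LinearMap.coe_proj, LinearMap.coe_single, Function.eval]
    rw [TMap_single_apply, TMap_apply, Finset.sum_eq_single q₀ (fun q _ hq =>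
      dite_eq_right_iff.mpr fun hqp => by rw [h q p hqp hq, LinearMap.zero_apply]) (by simp)]
  rw [lrank, hfactor, LinearMap.range_comp]
  exact (Submodule.finrank_map_le _ _).trans (Submodule.finrank_le _)

end Modules

section Invariance

variable {P : Type} [PartialOrder P] {n : ℕ} {S : Fin n → Finset P}

theorem sliceHom_comp_TMap {M N : PersistenceModule K P} (f : PersistenceHom M N) :
    sliceHom f S ∘ₗ TMap M S = TMap N S ∘ₗ sliceHom f S := by
  refine LinearMap.ext fun g => funext fun p => ?_
  change f.app p.2.1 (TMap M S g p) = TMap N S (sliceHom f S g) p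
  rw [TMap_apply, TMap_apply, map_sum]
  refine Finset.sum_congr rfl fun q _ => ?_
  split_ifs with hqp
  · exact LinearMap.congr_fun (f.naturality hqp.2) (g q)
  · exact map_zero _

theorem PersistenceIso.lrank_TMap_eq {M N : PersistenceModule K P} (h : PersistenceIso M N) :
    lrank (TMap M S) = lrank (TMap N S) := by
  obtain ⟨f, hf⟩ := h
  let e : sliceSpace M S ≃ₗ[K] sliceSpace N S :=
    LinearEquiv.piCongrRight fun p => LinearEquiv.ofBijective (f.app p.2.1) (hf _)
  exact (lrank_eq_of_comp_eq e e (sliceHom_comp_TMap f (S := S)).symm).symm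

def sliceSpaceDsumEquiv (M₁ M₂ : PersistenceModule K P) (S : Fin n → Finset P) :
    sliceSpace (M₁.dsum M₂) S ≃ₗ[K] sliceSpace M₁ S × sliceSpace M₂ S :=
  { Equiv.arrowProdEquivProdArrow _ _ _ with
    map_add' := fun _ _ => rfl
    map_smul' := fun _ _ => rfl }

theorem PersistenceModule.pfd.finiteDimensional_sliceSpace {M : PersistenceModule K P}
    (hM : M.pfd) (S : Fin n → Finset P) : FiniteDimensional K (sliceSpace M S) :=
  have := fun p : SliceIdx S => hM p.2.1
  inferInstance

theorem lrank_TMap_dsum {M₁ M₂ : PersistenceModule K P} (h₁ : M₁.pfd) (h₂ : M₂.pfd) :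
    lrank (TMap (M₁.dsum M₂) S) = lrank (TMap M₁ S) + lrank (TMap M₂ S) := by
  have := h₁.finiteDimensional_sliceSpace S
  have := h₂.finiteDimensional_sliceSpace S
  let e := sliceSpaceDsumEquiv M₁ M₂ S
  have hcomm : (TMap M₁ S).prodMap (TMap M₂ S) ∘ₗ (e : _ →ₗ[K] _) =
      (e : _ →ₗ[K] _) ∘ₗ TMap (M₁.dsum M₂) S := by
    refine LinearMap.ext fun f => Prod.ext (funext fun p => ?_) (funext fun p => ?_)
    -- `erw`: `(M₁.dsum M₂).V z` is the product `M₁.V z × M₂.V z` only after unfolding `dsum`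
    · change TMap M₁ S (fun q => (f q).1) p = (TMap (M₁.dsum M₂) S f p).1
      rw [TMap_apply, TMap_apply]
      erw [Prod.fst_sum]
      exact Finset.sum_congr rfl fun q _ => by split_ifs <;> rfl
    · change TMap M₂ S (fun q => (f q).2) p = (TMap (M₁.dsum M₂) S f p).2
      rw [TMap_apply, TMap_apply]
      erw [Prod.snd_sum]
      exact Finset.sum_congr rfl fun q _ => by split_ifs <;> rfl
  rw [← lrank_prodMap, lrank_eq_of_comp_eq e e hcomm]

end Invariance

section Shift

variable {P : Type} [AddCommGroup P] [PartialOrder P] [IsOrderedAddMonoid P] {n : ℕ}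

theorem PersistenceModule.iso_shift_zero (M : PersistenceModule K P) :
    PersistenceIso M (M.shift 0) :=
  ⟨shMor M 0 le_rfl, fun z => M.map_bijective _ (zero_add z).le⟩

theorem transMap_refl (M : PersistenceModule K P) (S : Fin n → Finset P) (x : P) :
    transMap M S (le_refl x) = LinearMap.id :=
  LinearMap.ext fun f => funext fun p => LinearMap.congr_fun (M.map_refl _) (f p)

theorem jordanRk_one_zero_zero (M : PersistenceModule K P) (S : Fin n → Finset P) :
    jordanRk M S 1 0 0 = lrank (TMap M S) := by
  rw [jordanRk, dif_pos le_rfl, pow_one, transMap_refl, Submodule.map_id]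
  exact congrArg _ M.iso_shift_zero.lrank_TMap_eq.symm

end Shift

section Interval

variable {P : Type}

def intervalMap (U : Set P) (x y : P) : (PLift (x ∈ U) → K) →ₗ[K] (PLift (y ∈ U) → K) :=
  LinearMap.pi fun _ => if hx : x ∈ U then LinearMap.proj (PLift.up hx) else 0

theorem intervalMap_apply (U : Set P) (x y : P) (f : PLift (x ∈ U) → K)
    (hy : PLift (y ∈ U)) :
    intervalMap U x y f hy = if hx : x ∈ U then f ⟨hx⟩ else 0 := by
  unfold intervalMap
  split_ifs <;> rfl

variable [PartialOrder P]

variable (K) in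
/-- The interval module `I_U`: `PLift (z ∈ U) → K` is `K` for `z ∈ U` and zero otherwise. -/
def intervalModule (U : Set P) [U.OrdConnected] : PersistenceModule K P where
  V z := PLift (z ∈ U) → K
  map {x y} _ := intervalMap U x y
  map_refl x := LinearMap.ext fun f => funext fun ⟨hx⟩ => by simp [intervalMap_apply, hx]
  map_comp {x y z} hxy hyz := LinearMap.ext fun f => funext fun ⟨hz⟩ => by
    by_cases hx : x ∈ U
    · have hy : y ∈ U := Set.OrdConnected.out ‹_› hx hz ⟨hxy, hyz⟩
      simp [intervalMap_apply, hx, hy]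
    · simp [intervalMap_apply, hx]

variable (U : Set P) [U.OrdConnected]

theorem intervalModule_map_apply {x y : P} (h : x ≤ y) (f : (intervalModule K U).V x)
    (hy : PLift (y ∈ U)) :
    (intervalModule K U).map h f hy = if hx : x ∈ U then f ⟨hx⟩ else 0 :=
  intervalMap_apply U x y f hy

theorem intervalModule_pfd : (intervalModule K U).pfd := fun _ =>
  inferInstanceAs (FiniteDimensional K (PLift _ → K))

theorem intervalModule_subsingleton {z : P} (hz : z ∉ U) :
    Subsingleton ((intervalModule K U).V z) :=
  ⟨fun _ _ => funext fun h => absurd h.down hz⟩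

theorem finrank_intervalModule {z : P} (hz : z ∈ U) :
    Module.finrank K ((intervalModule K U).V z) = 1 := by
  have : Unique (PLift (z ∈ U)) := ⟨⟨⟨hz⟩⟩, fun _ => rfl⟩
  exact (Module.finrank_fintype_fun_eq_card K).trans Fintype.card_unique

theorem intervalModule_map_eq_zero {x y : P} (h : x ≤ y) (hxy : ¬(x ∈ U ∧ y ∈ U)) :
    (intervalModule K U).map h = 0 :=
  LinearMap.ext fun f => funext fun ⟨hy⟩ => by
    rw [intervalModule_map_apply, dif_neg fun hx => hxy ⟨hx, hy⟩]
    rfl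

theorem lrank_intervalModule_map {x y : P} (h : x ≤ y) :
    lrank ((intervalModule K U).map h) = if x ∈ U ∧ y ∈ U then 1 else 0 := by
  split_ifs with hxy
  · have hinj : Function.Injective ((intervalModule K U).map h) := by
      rw [← LinearMap.ker_eq_bot, LinearMap.ker_eq_bot']
      refine fun f hf => funext fun ⟨hx⟩ => ?_
      have hfx := congrFun hf ⟨hxy.2⟩
      rwa [intervalModule_map_apply, dif_pos hx] at hfx
    rw [lrank, LinearMap.finrank_range_of_inj hinj, finrank_intervalModule U hxy.1]
  · rw [lrank, intervalModule_map_eq_zero U h hxy, LinearMap.range_zero, finrank_bot]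

theorem rankInv_intervalModule {x y : P} (h : x ≤ y) :
    rankInv (intervalModule K U) x y = if x ∈ U ∧ y ∈ U then 1 else 0 := by
  rw [rankInv, dif_pos h, lrank_intervalModule_map]
  split_ifs <;> rfl

variable {n : ℕ} {S : Fin n → Finset P}

theorem TMap_intervalModule_eq_zero
    (h : ∀ q p : SliceIdx S, q.IsEdge p → q.2.1 ∈ U → p.2.1 ∉ U) :
    TMap (intervalModule K U) S = 0 :=
  TMap_eq_zero_of_map_eq_zero _ fun q p hqp =>
    intervalModule_map_eq_zero U _ fun hU => h q p hqp hU.1 hU.2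

theorem lrank_TMap_intervalModule_eq_one (q₀ p₀ : SliceIdx S) (hedge : q₀.IsEdge p₀)
    (hq₀ : q₀.2.1 ∈ U) (hp₀ : p₀.2.1 ∈ U)
    (huniq : ∀ q p : SliceIdx S, q.IsEdge p → q.2.1 ∈ U → p.2.1 ∈ U → q = q₀) :
    lrank (TMap (intervalModule K U) S) = 1 := by
  have := intervalModule_pfd (K := K) U q₀.2.1
  have := (intervalModule_pfd (K := K) U).finiteDimensional_sliceSpace S
  have hle := lrank_TMap_le_finrank (intervalModule K U) q₀ fun q p hqp hq =>
    intervalModule_map_eq_zero U _ fun hU => hq (huniq q p hqp hU.1 hU.2)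
  rw [finrank_intervalModule U hq₀] at hle
  have hne : TMap (intervalModule K U) S ≠ 0 := by
    intro h0
    have h1 := TMap_single_apply (intervalModule K U) q₀ p₀ fun _ => 1
    rw [h0, dif_pos hedge] at h1
    have h2 := (congrFun h1 ⟨hp₀⟩).trans (intervalModule_map_apply U hedge.2 _ _)
    rw [dif_pos hq₀] at h2
    exact zero_ne_one h2
  refine le_antisymm hle (Nat.one_le_iff_ne_zero.mpr fun h0 => hne ?_)
  rwa [lrank, Submodule.finrank_eq_zero, LinearMap.range_eq_bot] at h0

end Interval

section IccPair

variable {P : Type} [PartialOrder P]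

instance ordConnected_Icc_union_Icc (a b c : P) : (Icc a b ∪ Icc a c).OrdConnected :=
  ⟨fun _ hx _ hz _ hy =>
    have ha : a ≤ _ := (hx.elim And.left And.left).trans hy.1
    hz.imp (fun hz => ⟨ha, hy.2.trans hz.2⟩) fun hz => ⟨ha, hy.2.trans hz.2⟩⟩

theorem rankInv_union_dsum_inter_Icc (a b c x y : P) :
    rankInv ((intervalModule K (Icc a b ∪ Icc a c)).dsum
        (intervalModule K (Icc a b ∩ Icc a c))) x y =
      rankInv ((intervalModule K (Icc a b)).dsum (intervalModule K (Icc a c))) x y := by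
  simp only [rankInv_dsum (intervalModule_pfd _) (intervalModule_pfd _)]
  by_cases h : x ≤ y
  · simp only [rankInv_intervalModule _ h, mem_union, mem_inter_iff]
    have hbc : x ∈ Icc a b → y ∈ Icc a c → x ∈ Icc a c := fun hx hy => ⟨hx.1, h.trans hy.2⟩
    have hcb : x ∈ Icc a c → y ∈ Icc a b → x ∈ Icc a b := fun hx hy => ⟨hx.1, h.trans hy.2⟩
    by_cases hxb : x ∈ Icc a b <;> by_cases hxc : x ∈ Icc a c <;>
      by_cases hyb : y ∈ Icc a b <;> by_cases hyc : y ∈ Icc a c <;> simp_all [-mem_Icc]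
  · simp [rankInv, h]

end IccPair

section Grid

variable {d : ℕ} {ℓ : Fin d → ℕ}

theorem mem_gridSlice {i : ℕ} {x : Fin d → ℤ} :
    x ∈ gridSlice d ℓ i ↔ (∀ k, x k ∈ Finset.Icc (0 : ℤ) (ℓ k)) ∧ ∑ k, x k = i := by
  rw [gridSlice, Finset.mem_filter, Fintype.mem_piFinset]

theorem eq_zero_of_mem_gridSlice_zero {x : Fin d → ℤ} (hx : x ∈ gridSlice d ℓ 0) : x = 0 := by
  obtain ⟨hbox, hsum⟩ := mem_gridSlice.mp hx
  have hnonneg : ∀ k ∈ Finset.univ, 0 ≤ x k := fun k _ => (Finset.mem_Icc.mp (hbox k)).1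
  exact funext fun k =>
    (Finset.sum_eq_zero_iff_of_nonneg hnonneg).mp (by exact_mod_cast hsum) k (Finset.mem_univ k)

theorem zero_mem_gridSlice_zero : (0 : Fin d → ℤ) ∈ gridSlice d ℓ 0 :=
  mem_gridSlice.mpr ⟨fun k => Finset.mem_Icc.mpr ⟨le_rfl, by positivity⟩, by simp⟩

theorem single_apply_mem_Icc {k : Fin d} (hk : 1 ≤ ℓ k) (j : Fin d) :
    (Pi.single k 1 : Fin d → ℤ) j ∈ Icc 0 (ℓ j : ℤ) := by
  rcases eq_or_ne j k with rfl | hj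
  · simp only [Pi.single_eq_same]
    exact ⟨zero_le_one, by exact_mod_cast hk⟩
  · simp [Pi.single_eq_of_ne hj]

theorem single_mem_gridSlice_one {k : Fin d} (hk : 1 ≤ ℓ k) :
    Pi.single k (1 : ℤ) ∈ gridSlice d ℓ 1 :=
  mem_gridSlice.mpr ⟨fun j => Finset.mem_Icc.mpr (single_apply_mem_Icc hk j), by simp⟩

theorem Icc_zero_single_subset_gridSet {k : Fin d} (hk : 1 ≤ ℓ k) :
    Icc 0 (Pi.single k (1 : ℤ)) ⊆ gridSet d ℓ := fun _ hx j =>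
  ⟨hx.1 j, (hx.2 j).trans (single_apply_mem_Icc hk j).2⟩

theorem sum_le_one_of_le_single {k : Fin d} {x : Fin d → ℤ} (hx : x ≤ Pi.single k 1) :
    ∑ j, x j ≤ 1 :=
  (Finset.sum_le_sum fun j _ => hx j).trans_eq (by simp)

theorem Icc_zero_single_inter_subset {k₀ k₁ : Fin d} (hk : k₀ ≠ k₁) :
    Icc (0 : Fin d → ℤ) (Pi.single k₀ 1) ∩ Icc 0 (Pi.single k₁ 1) ⊆ {0} := fun x hx =>
  funext fun j => by
    obtain ⟨⟨h0, h₀⟩, -, h₁⟩ := hx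
    rcases eq_or_ne j k₀ with rfl | hj
    · exact le_antisymm (by simpa [Pi.single_eq_of_ne hk] using h₁ j) (h0 j)
    · exact le_antisymm (by simpa [Pi.single_eq_of_ne hj] using h₀ j) (h0 j)

variable {n : ℕ}

theorem gridSlice_edge_sum {q p : SliceIdx fun i : Fin n => gridSlice d ℓ i}
    (h : q.IsEdge p) :
    ∑ k, p.2.1 k = ∑ k, q.2.1 k + 1 := by
  rw [(mem_gridSlice.mp p.2.2).2, (mem_gridSlice.mp q.2.2).2, ← h.1]
  push_cast
  ring

theorem gridSlice_edge_source_eq (hn : 0 < n)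
    {q p : SliceIdx fun i : Fin n => gridSlice d ℓ i} (h : q.IsEdge p) (hp : ∑ k, p.2.1 k ≤ 1) :
    q = ⟨⟨0, hn⟩, ⟨0, zero_mem_gridSlice_zero⟩⟩ := by
  obtain ⟨⟨i, _⟩, x, hx⟩ := q
  have hsum := (mem_gridSlice.mp hx).2
  have hi0 : (i : ℤ) ≤ 0 := by linarith [gridSlice_edge_sum h]
  obtain rfl : i = 0 := by omega
  obtain rfl := eq_zero_of_mem_gridSlice_zero hx
  rfl

variable (U : Set (Fin d → ℤ)) [U.OrdConnected]

theorem lrank_TMap_gridSlice_intervalModule_eq_zero (hU : U ⊆ {0}) :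
    lrank (TMap (intervalModule K U) fun i : Fin n => gridSlice d ℓ i) = 0 := by
  rw [TMap_intervalModule_eq_zero U fun q p h hq hp => ?_, lrank, LinearMap.range_zero,
    finrank_bot]
  have := gridSlice_edge_sum h
  rw [hU hq, hU hp] at this
  simp at this

theorem lrank_TMap_gridSlice_intervalModule_eq_one (hn : 1 < n)
    (hU : ∀ x ∈ U, ∑ j, x j ≤ 1) (h0 : 0 ∈ U) {k : Fin d} (hk : 1 ≤ ℓ k)
    (hkU : Pi.single k 1 ∈ U) :
    lrank (TMap (intervalModule K U) fun i : Fin n => gridSlice d ℓ i) = 1 :=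
  lrank_TMap_intervalModule_eq_one U ⟨⟨0, by omega⟩, ⟨0, zero_mem_gridSlice_zero⟩⟩
    ⟨⟨1, hn⟩, ⟨Pi.single k 1, single_mem_gridSlice_one hk⟩⟩ ⟨rfl, Pi.single_nonneg.mpr zero_le_one⟩
    h0 hkU fun _ _ h _ hp => gridSlice_edge_source_eq _ h (hU _ hp)

variable {k₀ k₁ : Fin d}

theorem zero_mem_Icc_zero_single (k : Fin d) : (0 : Fin d → ℤ) ∈ Icc 0 (Pi.single k 1) :=
  left_mem_Icc.mpr (Pi.single_nonneg.mpr zero_le_one)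

theorem single_mem_Icc_zero_single (k : Fin d) :
    Pi.single k 1 ∈ Icc (0 : Fin d → ℤ) (Pi.single k 1) :=
  right_mem_Icc.mpr (Pi.single_nonneg.mpr zero_le_one)

theorem lrank_TMap_gridSlice_union_dsum_inter (hn : 1 < n) (hk : k₀ ≠ k₁) (hℓ : 1 ≤ ℓ k₀) :
    lrank (TMap ((intervalModule K (Icc 0 (Pi.single k₀ 1) ∪ Icc 0 (Pi.single k₁ 1))).dsum
      (intervalModule K (Icc 0 (Pi.single k₀ 1) ∩ Icc 0 (Pi.single k₁ 1))))
        fun i : Fin n => gridSlice d ℓ i) = 1 := by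
  rw [lrank_TMap_dsum (intervalModule_pfd _) (intervalModule_pfd _),
    lrank_TMap_gridSlice_intervalModule_eq_zero _ (Icc_zero_single_inter_subset hk),
    lrank_TMap_gridSlice_intervalModule_eq_one _ hn
      (fun _ hx => hx.elim (fun hx => sum_le_one_of_le_single hx.2)
        fun hx => sum_le_one_of_le_single hx.2)
      (Or.inl (zero_mem_Icc_zero_single k₀)) hℓ (Or.inl (single_mem_Icc_zero_single k₀))]

theorem lrank_TMap_gridSlice_dsum_Icc (hn : 1 < n) (hℓ₀ : 1 ≤ ℓ k₀) (hℓ₁ : 1 ≤ ℓ k₁) :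
    lrank (TMap ((intervalModule K (Icc 0 (Pi.single k₀ 1))).dsum
      (intervalModule K (Icc 0 (Pi.single k₁ 1)))) fun i : Fin n => gridSlice d ℓ i) = 2 := by
  rw [lrank_TMap_dsum (intervalModule_pfd _) (intervalModule_pfd _),
    lrank_TMap_gridSlice_intervalModule_eq_one _ hn (fun _ hx => sum_le_one_of_le_single hx.2)
      (zero_mem_Icc_zero_single k₀) hℓ₀ (single_mem_Icc_zero_single k₀),
    lrank_TMap_gridSlice_intervalModule_eq_one _ hn (fun _ hx => sum_le_one_of_le_single hx.2)
      (zero_mem_Icc_zero_single k₁) hℓ₁ (single_mem_Icc_zero_single k₁)]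

end Grid

theorem supportedOn.dsum {d : ℕ} {M₁ M₂ : PersistenceModule K (Fin d → ℤ)} {G : Set (Fin d → ℤ)}
    (h₁ : supportedOn M₁ G) (h₂ : supportedOn M₂ G) : supportedOn (M₁.dsum M₂) G :=
  fun z hz =>
    have := h₁ z hz; have := h₂ z hz
    inferInstanceAs (Subsingleton (M₁.V z × M₂.V z))

theorem supportedOn_intervalModule {d : ℕ} {U G : Set (Fin d → ℤ)} [U.OrdConnected]
    (hU : U ⊆ G) : supportedOn (intervalModule K U) G :=
  fun _ hz => intervalModule_subsingleton U fun h => hz (hU h)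

/-- for `d ≥ 2` there are grid modules with equal rank invariants but
different degree-`1` Jordan rank invariants; in particular they are non-isomorphic. -/
theorem statement12 (K : Type) [Field K] (d : ℕ) (hd : 2 ≤ d) (ℓ : Fin d → ℕ)
    (hℓ : ∀ k, 1 ≤ ℓ k) (n : ℕ) (hn : n = (∑ k, ℓ k) + 1) :
    ∃ X Y : PersistenceModule K (Fin d → ℤ),
      X.pfd ∧ Y.pfd ∧ supportedOn X (gridSet d ℓ) ∧ supportedOn Y (gridSet d ℓ) ∧
      (∀ x y : Fin d → ℤ, rankInv X x y = rankInv Y x y) ∧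
      jordanRk X (fun i : Fin n => gridSlice d ℓ (i : ℕ)) 1 0 0 = (1 : ℕ∞) ∧
      jordanRk Y (fun i : Fin n => gridSlice d ℓ (i : ℕ)) 1 0 0 = (2 : ℕ∞) ∧
      jordanRk X (fun i : Fin n => gridSlice d ℓ (i : ℕ)) 1 0 0 ≠
        jordanRk Y (fun i : Fin n => gridSlice d ℓ (i : ℕ)) 1 0 0 ∧
      ¬ PersistenceIso X Y := by
  let k₀ : Fin d := ⟨0, by omega⟩
  let k₁ : Fin d := ⟨1, by omega⟩
  have hn1 : 1 < n := by
    linarith [hℓ k₀, Finset.single_le_sum (fun k _ => Nat.zero_le (ℓ k)) (Finset.mem_univ k₀)]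
  let S := fun i : Fin n => gridSlice d ℓ (i : ℕ)
  let A := Icc (0 : Fin d → ℤ) (Pi.single k₀ 1)
  let B := Icc (0 : Fin d → ℤ) (Pi.single k₁ 1)
  let X := (intervalModule K (A ∪ B)).dsum (intervalModule K (A ∩ B))
  let Y := (intervalModule K A).dsum (intervalModule K B)
  have hTX : lrank (TMap X S) = 1 :=
    lrank_TMap_gridSlice_union_dsum_inter hn1 (by simp [k₀, k₁]) (hℓ k₀)
  have hTY : lrank (TMap Y S) = 2 := lrank_TMap_gridSlice_dsum_Icc hn1 (hℓ k₀) (hℓ k₁)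
  have hX : jordanRk X S 1 0 0 = 1 := by rw [jordanRk_one_zero_zero, hTX, Nat.cast_one]
  have hY : jordanRk Y S 1 0 0 = 2 := by rw [jordanRk_one_zero_zero, hTY, Nat.cast_ofNat]
  have hAG := Icc_zero_single_subset_gridSet (hℓ k₀)
  have hBG := Icc_zero_single_subset_gridSet (hℓ k₁)
  refine ⟨X, Y, (intervalModule_pfd _).dsum (intervalModule_pfd _),
    (intervalModule_pfd _).dsum (intervalModule_pfd _),
    (supportedOn_intervalModule (union_subset hAG hBG)).dsum
      (supportedOn_intervalModule (inter_subset_left.trans hAG)),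
    (supportedOn_intervalModule hAG).dsum (supportedOn_intervalModule hBG),
    rankInv_union_dsum_inter_Icc 0 _ _, hX, hY, by rw [hX, hY]; decide, fun hXY => ?_⟩
  have := hXY.lrank_TMap_eq (S := S)
  omega

end
end

section
/- Let P = ℤ^d or ℝ^d with the product order and let F and G be rank functions on P. Then ‖λ_F − λ_G‖_∞ ≤ d_E(F,G), i.e. sup_{(k,x) ∈ ℕ×P} |λ_F(k,x) − λ_G(k,x)| is at most the erosion distance between F and G. -/
open scoped Classical ENNReal

noncomputable section

variable {K : Type} [Field K]

section LandscapeStability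

variable {R : Type} [CommRing R] {d : ℕ}

theorem ofReal_le_landscape (toR : R → ℝ) {F : (Fin d → R) → (Fin d → R) → ℕ∞} {k : ℕ}
    {x : Fin d → R} {δ : ℝ}
    (hF : ∀ h : Fin d → R, (∀ i, |toR (h i)| ≤ δ) → (k : ℕ∞) ≤ F (x - h) (x + h)) :
    ENNReal.ofReal δ ≤ landscape toR F k x := by
  rcases le_or_gt δ 0 with hδ | hδ
  · simp [ENNReal.ofReal_of_nonpos hδ]
  · exact le_sSup ⟨δ, hδ, hF, rfl⟩

/-- Eroding by `ε` turns a box of radius `δ` around `x` on which `F ≥ k` along the diagonal into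
a box of radius `δ - ε` on which `G ≥ k`; off the order relation `G` is `⊤` anyway. -/
theorem landscape_le_add_of_erosion [PartialOrder R] (toR : R →+o ℝ)
    {F G : (Fin d → R) → (Fin d → R) → ℕ∞}
    (hG : IsRankFunction G) {ε : R} (hε : 0 ≤ ε)
    (herode : ∀ x y : Fin d → R, x ≤ y → F (x - fun _ => ε) (y + fun _ => ε) ≤ G x y)
    (k : ℕ) (x : Fin d → R) :
    landscape toR F k x ≤ landscape toR G k x + ENNReal.ofReal (toR ε) := by
  have hε' : 0 ≤ toR ε := by simpa using toR.monotone' hε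
  refine sSup_le ?_
  rintro _ ⟨δ, -, hδ, rfl⟩
  have hG_box : ∀ h : Fin d → R, (∀ i, |toR (h i)| ≤ δ - toR ε) →
      (k : ℕ∞) ≤ G (x - h) (x + h) := by
    intro h hh
    by_cases hle : x - h ≤ x + h
    · have hbox : ∀ i, |toR ((h + fun _ => ε : Fin d → R) i)| ≤ δ := fun i => by
        rw [Pi.add_apply, map_add]
        linarith [abs_add_le (toR (h i)) (toR ε), abs_of_nonneg hε', hh i]
      calc (k : ℕ∞) ≤ F (x - (h + fun _ => ε)) (x + (h + fun _ => ε)) := hδ _ hbox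
        _ = F (x - h - fun _ => ε) (x + h + fun _ => ε) := by rw [sub_sub, add_assoc]
        _ ≤ G (x - h) (x + h) := herode _ _ hle
    · simp [hG.1 _ _ hle]
  calc ENNReal.ofReal δ = ENNReal.ofReal (δ - toR ε + toR ε) := by rw [sub_add_cancel]
    _ ≤ ENNReal.ofReal (δ - toR ε) + ENNReal.ofReal (toR ε) := ENNReal.ofReal_add_le
    _ ≤ landscape toR G k x + ENNReal.ofReal (toR ε) := by
      gcongr
      exact ofReal_le_landscape toR hG_box

theorem landscapeDist_le_erosionDist [LinearOrder R] [IsStrictOrderedRing R] (toR : R →+o ℝ)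
    {F G : (Fin d → R) → (Fin d → R) → ℕ∞}
    (hF : IsRankFunction F) (hG : IsRankFunction G) :
    landscapeDist toR F G ≤ erosionDist toR F G := by
  refine le_sInf ?_
  rintro _ ⟨ε, hε, herode, rfl⟩
  refine iSup₂_le fun k x => max_le ?_ ?_ <;> rw [tsub_le_iff_right, add_comm]
  · exact landscape_le_add_of_erosion toR hG hε (fun x y h => (herode x y h).1) k x
  · exact landscape_le_add_of_erosion toR hF hε (fun x y h => (herode x y h).2) k x

end LandscapeStability

/-- `‖λ_F - λ_G‖_∞ ≤ d_E(F,G)` for rank functions, over `ℤ^d` and `ℝ^d`. -/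
theorem statement14 (d : ℕ) :
    (∀ F G : (Fin d → ℤ) → (Fin d → ℤ) → ℕ∞, IsRankFunction F → IsRankFunction G →
      landscapeDist (fun z : ℤ => (z : ℝ)) F G ≤
        erosionDist (fun z : ℤ => (z : ℝ)) F G) ∧
    (∀ F G : (Fin d → ℝ) → (Fin d → ℝ) → ℕ∞, IsRankFunction F → IsRankFunction G →
      landscapeDist (id : ℝ → ℝ) F G ≤ erosionDist (id : ℝ → ℝ) F G) :=
  ⟨fun _ _ hF hG => landscapeDist_le_erosionDist ⟨Int.castAddHom ℝ, Int.cast_mono⟩ hF hG,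
    fun _ _ hF hG => landscapeDist_le_erosionDist (OrderAddMonoidHom.id ℝ) hF hG⟩

end
end
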